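/- arXiv:1605.00165 — 2 statements merged into one kernel-verified Lean document; each statement's English description precedes it below -/
import Mathlib

section
/- Let s ≥ 1, let a₁,…,a_s be positive real numbers linearly independent over ℚ, and let G = {Σ_{i=1}^s m_i a_i : m_i ∈ ℤ}. Let b > 0 and let μ = δ_{bℤ} = Σ_{k∈ℤ} δ_{bk}. Then there exist constants A, B > 0 such that μ ∈ 𝓕(G,A,B) if and only if 1/b does not belong to the ℚ-linear span of a₁,…,a_s; and in that case μ ∈ 𝓕(G, 1/b, 1/b). -/
open MeasureTheory Filter Real Complex
open scoped ENNReal NNReal Topology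

noncomputable section

/-- The interval `Q_ε = [-ε/2, ε/2]`. -/
def QI (ε : ℝ) : Set ℝ := Set.Icc (-(ε / 2)) (ε / 2)

/-- The Fourier transform `f̂(ξ) = ∫ f(x) e^{-2πi ξx} dx` on `ℝ`. -/
def Ft1 (f : ℝ → ℂ) (ξ : ℝ) : ℂ :=
  ∫ x : ℝ, Complex.exp (-2 * (π : ℂ) * Complex.I * ((ξ * x : ℝ) : ℂ)) * f x

/-- The squared `L²`-norm `‖f‖₂²`. -/
def l2sq1 (f : ℝ → ℂ) : ℝ≥0∞ := ∫⁻ x, (‖f x‖₊ : ℝ≥0∞) ^ 2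

/-- `f ∈ L²(E)`: square-integrable and vanishing a.e. outside `E`. -/
def MemL2On1 (f : ℝ → ℂ) (E : Set ℝ) : Prop :=
  AEStronglyMeasurable f (volume : Measure ℝ) ∧ l2sq1 f < ⊤ ∧ ∀ᵐ x : ℝ, x ∉ E → f x = 0

/-- `μ ∈ 𝓑(S,B)`: uniform Bessel measure for the set `S` with limiting upper bound `≤ B`. -/
def UniformBessel (μ : Measure ℝ) (S : Set ℝ) (B : ℝ) : Prop :=
  ∀ (M : ℕ) (x : Fin M → ℝ), (∀ j, x j ∈ S) → Function.Injective x →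
    ∀ δ : ℝ, 0 < δ → ∃ ε : ℝ, 0 < ε ∧
      Pairwise (Function.onFun Disjoint fun j => (x j + ·) '' QI ε) ∧
      ∀ f : ℝ → ℂ, MemL2On1 f (⋃ j, (x j + ·) '' QI ε) →
        (∫⁻ ξ, (‖Ft1 f ξ‖₊ : ℝ≥0∞) ^ 2 ∂μ) ≤ ENNReal.ofReal (B + δ) * l2sq1 f

/-- `μ ∈ 𝓕(S,A,B)`: uniform frame measure for the set `S` with limiting lower bound `≥ A`
and limiting upper bound `≤ B`. -/
def UniformFrame (μ : Measure ℝ) (S : Set ℝ) (A B : ℝ) : Prop :=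
  ∀ (M : ℕ) (x : Fin M → ℝ), (∀ j, x j ∈ S) → Function.Injective x →
    ∀ δ : ℝ, 0 < δ → ∃ ε : ℝ, 0 < ε ∧
      Pairwise (Function.onFun Disjoint fun j => (x j + ·) '' QI ε) ∧
      ∀ f : ℝ → ℂ, MemL2On1 f (⋃ j, (x j + ·) '' QI ε) →
        ENNReal.ofReal (A - δ) * l2sq1 f ≤ (∫⁻ ξ, (‖Ft1 f ξ‖₊ : ℝ≥0∞) ^ 2 ∂μ) ∧
        (∫⁻ ξ, (‖Ft1 f ξ‖₊ : ℝ≥0∞) ^ 2 ∂μ) ≤ ENNReal.ofReal (B + δ) * l2sq1 f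

/-- The upper Beurling density `D⁺(ν) = limsup_{h→∞} sup_{t} ν(t+[-h/2,h/2])/h`. -/
def uD1 (ν : Measure ℝ) : ℝ≥0∞ :=
  Filter.limsup (fun h : ℝ => ⨆ t : ℝ, ν (Set.Icc (t - h / 2) (t + h / 2)) /
    ENNReal.ofReal h) atTop

/-- The lower Beurling density `D⁻(ν) = liminf_{h→∞} inf_{t} ν(t+[-h/2,h/2])/h`. -/
def lD1 (ν : Measure ℝ) : ℝ≥0∞ :=
  Filter.liminf (fun h : ℝ => ⨅ t : ℝ, ν (Set.Icc (t - h / 2) (t + h / 2)) /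
    ENNReal.ofReal h) atTop

/-- The subgroup of `ℝ` generated by `a₁,…,a_s`. -/
def Gset (s : ℕ) (a : Fin s → ℝ) : Set ℝ :=
  {x | ∃ m : Fin s → ℤ, x = ∑ i, (m i : ℝ) * a i}

/-!
Put `T = 1/b`. All exponentials `e^{-2πi bk t}` are `T`-periodic, so translating pieces of `f` by
multiples of `T` changes neither the samples `f̂(bk)` nor `‖f‖₂`. If `1/b` is not in the `ℚ`-span
of the `aᵢ`, distinct points of `G` stay distinct modulo `T`; for small `ε` the intervals
`x_j + Q_ε` can then be translated into one period `(c, c + T]` without overlapping, and Parseval's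
identity for Fourier series on that period gives `∑ₖ |f̂(bk)|² = T ‖f‖₂²` exactly. If instead
`1/b = ∑ qᵢ aᵢ`, some `p = D/b` with `D ≥ 1` lies in `G`, and the dipole `𝟙_{Q_ε} - 𝟙_{p + Q_ε}`
has `f̂(bk) = 0` for every `k`, which rules out any positive lower frame bound.
-/

open Set Function Topology Filter

lemma image_add_QI (x ε : ℝ) : (x + ·) '' QI ε = Icc (x - ε / 2) (x + ε / 2) := by
  rw [QI, image_const_add_Icc, ← sub_eq_add_neg]

lemma lintegral_sum_dirac_mul (b : ℝ) (φ : ℝ → ℝ≥0∞) :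
    ∫⁻ ξ, φ ξ ∂(Measure.sum fun k : ℤ => Measure.dirac (b * k)) = ∑' k : ℤ, φ (b * k) := by
  simp [lintegral_sum_measure]

lemma Ft1_congr_ae {f g : ℝ → ℂ} (h : f =ᵐ[volume] g) : Ft1 f = Ft1 g :=
  funext fun _ => integral_congr_ae (h.mono fun x hx => by simp only [hx])

lemma Ft1_comp_add_right (f : ℝ → ℂ) (h ξ : ℝ) :
    Ft1 (fun t => f (t + h)) ξ = Complex.exp (2 * π * I * ((ξ * h : ℝ) : ℂ)) * Ft1 f ξ := by
  have hphase : ∀ x : ℝ, Complex.exp (-2 * π * I * ((ξ * x : ℝ) : ℂ)) =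
      Complex.exp (2 * π * I * ((ξ * h : ℝ) : ℂ)) *
        Complex.exp (-2 * π * I * ((ξ * (x + h) : ℝ) : ℂ)) := fun x => by
    rw [← Complex.exp_add]
    congr 1
    push_cast
    ring
  calc Ft1 (fun t => f (t + h)) ξ
      = ∫ x, Complex.exp (2 * π * I * ((ξ * h : ℝ) : ℂ)) *
          (Complex.exp (-2 * π * I * ((ξ * (x + h) : ℝ) : ℂ)) * f (x + h)) := by
        refine integral_congr_ae (ae_of_all _ fun x => ?_)
        dsimp only
        rw [hphase x, mul_assoc]
    _ = _ := by
        rw [integral_const_mul, Ft1, integral_add_right_eq_self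
          (fun x => Complex.exp (-2 * π * I * ((ξ * x : ℝ) : ℂ)) * f x) h]

lemma Ft1_comp_add_right_of_mul_eq_intCast (f : ℝ → ℂ) {h ξ : ℝ} {m : ℤ} (hm : ξ * h = m) :
    Ft1 (fun t => f (t + h)) ξ = Ft1 f ξ := by
  rw [Ft1_comp_add_right, hm, Complex.ofReal_intCast, mul_comm _ (m : ℂ),
    Complex.exp_int_mul_two_pi_mul_I, one_mul]

lemma integrable_exp_mul {g : ℝ → ℂ} (hg : Integrable g) (ξ : ℝ) :
    Integrable fun x => Complex.exp (-2 * π * I * ((ξ * x : ℝ) : ℂ)) * g x := by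
  refine hg.bdd_mul (c := 1) (by fun_prop) (ae_of_all _ fun x => ?_)
  refine (Complex.norm_exp _).trans_le ?_
  simp

lemma Ft1_sum {ι : Type*} (s : Finset ι) {g : ι → ℝ → ℂ} (hg : ∀ i ∈ s, Integrable (g i))
    (ξ : ℝ) : Ft1 (fun t => ∑ i ∈ s, g i t) ξ = ∑ i ∈ s, Ft1 (g i) ξ := by
  simp only [Ft1, Finset.mul_sum]
  exact integral_finsetSum s fun i hi => integrable_exp_mul (hg i hi) ξ

lemma Ft1_sub {f g : ℝ → ℂ} (hf : Integrable f) (hg : Integrable g) (ξ : ℝ) :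
    Ft1 (fun t => f t - g t) ξ = Ft1 f ξ - Ft1 g ξ := by
  simp only [Ft1, mul_sub]
  exact integral_sub (integrable_exp_mul hf ξ) (integrable_exp_mul hg ξ)

lemma Ft1_sum_comp_add_right_of_mul_eq_intCast {ι : Type*} (s : Finset ι) {φ : ι → ℝ → ℂ}
    (hφ : ∀ i ∈ s, Integrable (φ i)) {h : ι → ℝ} {ξ : ℝ} {m : ι → ℤ} (hm : ∀ i, ξ * h i = m i) :
    Ft1 (fun t => ∑ i ∈ s, φ i (t + h i)) ξ = Ft1 (fun t => ∑ i ∈ s, φ i t) ξ := by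
  rw [Ft1_sum s fun i hi => (hφ i hi).comp_add_right (h i), Ft1_sum s hφ]
  exact Finset.sum_congr rfl fun i _ => Ft1_comp_add_right_of_mul_eq_intCast _ (hm i)

lemma Ft1_sub_comp_add_right_eq_zero {φ : ℝ → ℂ} (hφ : Integrable φ) {h ξ : ℝ} {m : ℤ}
    (hm : ξ * h = m) : Ft1 (fun t => φ t - φ (t + h)) ξ = 0 := by
  rw [Ft1_sub hφ (hφ.comp_add_right h), Ft1_comp_add_right_of_mul_eq_intCast φ hm, sub_self]

lemma l2sq1_congr_ae {f g : ℝ → ℂ} (h : f =ᵐ[volume] g) : l2sq1 f = l2sq1 g :=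
  lintegral_congr_ae (h.mono fun x hx => by simp only [hx])

lemma l2sq1_comp_add_right (f : ℝ → ℂ) (h : ℝ) : l2sq1 (fun t => f (t + h)) = l2sq1 f :=
  lintegral_add_right_eq_self (fun t => (‖f t‖₊ : ℝ≥0∞) ^ 2) h

lemma memLp_two_iff_l2sq1_lt_top {f : ℝ → ℂ} (hf : AEStronglyMeasurable f) :
    MemLp f 2 ↔ l2sq1 f < ⊤ := by
  rw [MemLp, eLpNorm_lt_top_iff_lintegral_rpow_enorm_lt_top two_ne_zero ENNReal.ofNat_ne_top]
  simp [hf, l2sq1, enorm_eq_nnnorm]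

lemma l2sq1_eq_ofReal_integral {g : ℝ → ℂ} (hg : MemLp g 2) :
    l2sq1 g = ENNReal.ofReal (∫ x, ‖g x‖ ^ 2) := by
  rw [ofReal_integral_eq_lintegral_ofReal (hg.integrable_norm_pow two_ne_zero)
    (ae_of_all _ fun x => by positivity)]
  refine lintegral_congr fun x => ?_
  rw [ENNReal.ofReal_pow (norm_nonneg _), ofReal_norm, enorm_eq_nnnorm]

lemma volume_le_l2sq1_of_norm_eq_one {f : ℝ → ℂ} {S : Set ℝ} (hS : MeasurableSet S)
    (hf : ∀ t ∈ S, ‖f t‖ = 1) : volume S ≤ l2sq1 f := by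
  calc volume S = ∫⁻ _ in S, 1 := (setLIntegral_one S).symm
    _ = ∫⁻ t in S, (‖f t‖₊ : ℝ≥0∞) ^ 2 := setLIntegral_congr_fun hS fun t ht => by
        simp [← enorm_eq_nnnorm, ← ofReal_norm, hf t ht]
    _ ≤ l2sq1 f := setLIntegral_le_lintegral _ _

lemma nnnorm_sum_sq_of_pairwise_disjoint_support {ι α E : Type*} [Fintype ι]
    [SeminormedAddCommGroup E] {g : ι → α → E}
    (hd : Pairwise (Disjoint on fun i => support (g i))) (t : α) :
    (‖∑ i, g i t‖₊ : ℝ≥0∞) ^ 2 = ∑ i, (‖g i t‖₊ : ℝ≥0∞) ^ 2 := by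
  by_cases ht : ∃ i, g i t ≠ 0
  · obtain ⟨i, hi⟩ := ht
    have hzero : ∀ j ≠ i, g j t = 0 := fun j hj =>
      notMem_support.1 fun hj' => disjoint_left.1 (hd hj) hj' hi
    rw [Finset.sum_eq_single i (fun j _ hj => hzero j hj) (by simp),
      Finset.sum_eq_single i (fun j _ hj => by simp [hzero j hj]) (by simp)]
  · simp_all

lemma l2sq1_sum_of_pairwise_disjoint_support {ι : Type*} [Fintype ι] {g : ι → ℝ → ℂ}
    (hg : ∀ i, AEMeasurable (g i)) (hd : Pairwise (Disjoint on fun i => support (g i))) :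
    l2sq1 (fun t => ∑ i, g i t) = ∑ i, l2sq1 (g i) := by
  simp_rw [l2sq1, nnnorm_sum_sq_of_pairwise_disjoint_support hd]
  exact lintegral_finsetSum' _ fun i _ => (hg i).nnnorm.coe_nnreal_ennreal.pow_const 2

lemma l2sq1_sum_comp_add_right {ι : Type*} [Fintype ι] {φ : ι → ℝ → ℂ}
    (hφ : ∀ i, AEMeasurable (φ i)) (h : ι → ℝ) (hd : Pairwise (Disjoint on fun i => support (φ i)))
    (hd' : Pairwise (Disjoint on fun i => support fun t => φ i (t + h i))) :
    l2sq1 (fun t => ∑ i, φ i (t + h i)) = l2sq1 (fun t => ∑ i, φ i t) := by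
  have hφh : ∀ i, AEMeasurable fun t => φ i (t + h i) := fun i =>
    (hφ i).comp_quasiMeasurePreserving (measurePreserving_add_right _ _).quasiMeasurePreserving
  rw [l2sq1_sum_of_pairwise_disjoint_support hφh hd',
    l2sq1_sum_of_pairwise_disjoint_support hφ hd]
  simp only [l2sq1_comp_add_right]

lemma Ft1_eq_mul_fourierCoeffOn {b : ℝ} (hb : 0 < b) (c : ℝ) {g : ℝ → ℂ}
    (hsupp : ∀ x ∉ Ioc c (c + 1 / b), g x = 0) (k : ℤ) :
    Ft1 g (b * k) = ((1 / b : ℝ) : ℂ) *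
      fourierCoeffOn (lt_add_of_pos_right c (one_div_pos.2 hb)) g k := by
  rw [fourierCoeffOn_eq_integral, add_sub_cancel_left, Complex.real_smul, ← mul_assoc,
    intervalIntegral.integral_of_le (by simp [hb.le]), Ft1,
    ← setIntegral_eq_integral_of_forall_compl_eq_zero fun x hx => by rw [hsupp x hx, mul_zero]]
  have hb' : (b : ℂ) ≠ 0 := by exact_mod_cast hb.ne'
  simp only [one_div, Complex.ofReal_inv]
  rw [mul_inv_cancel₀ (inv_ne_zero hb'), one_mul]
  refine setIntegral_congr_fun measurableSet_Ioc fun x _ => ?_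
  rw [fourier_coe_apply, smul_eq_mul]
  congr 2
  push_cast
  field_simp

lemma tsum_Ft1_sq_eq_of_eq_zero_off_Ioc {b : ℝ} (hb : 0 < b) (c : ℝ) {g : ℝ → ℂ}
    (hg : MemLp g 2) (hsupp : ∀ x ∉ Ioc c (c + 1 / b), g x = 0) :
    ∑' k : ℤ, (‖Ft1 g (b * k)‖₊ : ℝ≥0∞) ^ 2 = ENNReal.ofReal (1 / b) * l2sq1 g := by
  have hlt := lt_add_of_pos_right c (one_div_pos.2 hb)
  have hpars := (hasSum_sq_fourierCoeffOn hlt (hg.restrict _)).mul_left ((1 / b) ^ 2)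
  have hint : ∫ x in c..(c + 1 / b), ‖g x‖ ^ 2 = ∫ x, ‖g x‖ ^ 2 := by
    rw [intervalIntegral.integral_of_le hlt.le]
    exact setIntegral_eq_integral_of_forall_compl_eq_zero fun x hx => by simp [hsupp x hx]
  have hnorm : ∀ k : ℤ, ‖Ft1 g (b * k)‖ ^ 2 = (1 / b) ^ 2 * ‖fourierCoeffOn hlt g k‖ ^ 2 := by
    intro k
    rw [Ft1_eq_mul_fourierCoeffOn hb c hsupp, norm_mul, mul_pow, Complex.norm_real,
      Real.norm_of_nonneg (by positivity)]
  simp_rw [← hnorm, add_sub_cancel_left, hint, smul_eq_mul] at hpars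
  calc ∑' k : ℤ, (‖Ft1 g (b * k)‖₊ : ℝ≥0∞) ^ 2
      = ENNReal.ofReal (∑' k : ℤ, ‖Ft1 g (b * k)‖ ^ 2) := by
        rw [ENNReal.ofReal_tsum_of_nonneg (fun k => by positivity) hpars.summable]
        simp_rw [ENNReal.ofReal_pow (norm_nonneg _), ofReal_norm, enorm_eq_nnnorm]
    _ = ENNReal.ofReal (1 / b) * l2sq1 g := by
        rw [hpars.tsum_eq, l2sq1_eq_ofReal_integral hg, ← ENNReal.ofReal_mul (by positivity)]
        congr 1
        field_simp

lemma dist_coe_addCircle_le (T u v : ℝ) : dist (u : AddCircle T) v ≤ |u - v| := by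
  rw [dist_eq_norm, ← AddCircle.coe_sub]
  exact QuotientAddGroup.norm_mk_le_norm

lemma disjoint_Icc_of_lt_dist_coe {T ε u v : ℝ} (h : ε < dist (u : AddCircle T) v) :
    Disjoint (Icc (u - ε / 2) (u + ε / 2)) (Icc (v - ε / 2) (v + ε / 2)) := by
  refine disjoint_left.2 fun t ht ht' => ?_
  rcases lt_abs.1 (h.trans_le (dist_coe_addCircle_le T u v)) with h' | h' <;>
    linarith [ht.1, ht.2, ht'.1, ht'.2]

lemma coe_toIocMod {T : ℝ} (hT : 0 < T) (c x : ℝ) :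
    ((toIocMod hT c x : ℝ) : AddCircle T) = x := by
  rw [← self_sub_toIocDiv_zsmul, AddCircle.coe_sub, AddCircle.coe_zsmul, AddCircle.coe_period,
    smul_zero, sub_zero]

lemma Icc_subset_Ioc_of_lt_dist_coe {T : ℝ} (hT : 0 < T) {ε c x : ℝ}
    (h : ε / 2 < dist (x : AddCircle T) c) :
    Icc (toIocMod hT c x - ε / 2) (toIocMod hT c x + ε / 2) ⊆ Ioc c (c + T) := by
  set y := toIocMod hT c x
  obtain ⟨hcy, hyc⟩ := toIocMod_mem_Ioc hT c x
  rw [← coe_toIocMod hT c x] at h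
  have hleft := h.trans_le (dist_coe_addCircle_le T y c)
  rw [← AddCircle.coe_add_period T c] at h
  have hright := h.trans_le (dist_coe_addCircle_le T y (c + T))
  rw [abs_of_pos (by linarith)] at hleft
  rw [abs_of_nonpos (by linarith)] at hright
  exact fun t ht => ⟨by linarith [ht.1], by linarith [ht.2]⟩

lemma exists_pos_lt_dist_coe {T : ℝ} (hT : 0 < T) {ι : Type*} [Finite ι] {x : ι → ℝ}
    (hx : Injective fun j => (x j : AddCircle T)) :
    ∃ ε > 0, ∃ c : ℝ, (Pairwise fun i j => ε < dist (x i : AddCircle T) (x j)) ∧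
      ∀ j, ε / 2 < dist (x j : AddCircle T) c := by
  have hsep : ∀ i j, ∀ᶠ ε in 𝓝 (0 : ℝ), i ≠ j → 2 * ε < dist (x i : AddCircle T) (x j) := by
    intro i j
    by_cases hij : i = j
    · simp [hij]
    have hlim : Tendsto (fun ε : ℝ => 2 * ε) (𝓝 0) (𝓝 0) :=
      (continuous_const_mul 2).tendsto' 0 0 (mul_zero 2)
    exact (hlim.eventually (gt_mem_nhds (dist_pos.2 (hx.ne hij)))).mono fun _ h _ => h
  obtain ⟨ε, ⟨hεT, hε2⟩, hε⟩ :=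
    (((eventually_le_nhds (half_pos hT)).and (eventually_all.2 fun i => eventually_all.2 (hsep i))
      ).filter_mono nhdsWithin_le_nhds |>.and self_mem_nhdsWithin).exists (f := 𝓝[>] (0 : ℝ))
  have hpair : Pairwise fun i j => ε < dist (x i : AddCircle T) (x j) :=
    fun i j hij => by linarith [hε2 i j hij, hε]
  rcases isEmpty_or_nonempty ι with hι | ⟨⟨j₀⟩⟩
  · exact ⟨ε, hε, 0, hpair, isEmptyElim⟩
  refine ⟨ε, hε, x j₀ - ε, hpair, fun j => ?_⟩
  have hj₀ : dist (x j₀ : AddCircle T) ↑(x j₀ - ε) = ε := by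
    rw [dist_eq_norm, ← AddCircle.coe_sub, sub_sub_cancel,
      (AddCircle.norm_coe_eq_abs_iff T hT.ne').2 (by rwa [abs_of_pos hε, abs_of_pos hT]),
      abs_of_pos hε]
  by_cases hj : j = j₀
  · rw [hj, hj₀]
    linarith [hε]
  · linarith [hε2 j j₀ hj, dist_triangle_right (x j : AddCircle T) (x j₀) ↑(x j₀ - ε)]

lemma sub_mem_Gset {s : ℕ} {a : Fin s → ℝ} {x y : ℝ} (hx : x ∈ Gset s a) (hy : y ∈ Gset s a) :
    x - y ∈ Gset s a := by
  obtain ⟨m, rfl⟩ := hx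
  obtain ⟨m', rfl⟩ := hy
  exact ⟨m - m', by simp [sub_mul, Finset.sum_sub_distrib]⟩

lemma exists_rat_of_intCast_mul_mem_Gset {s : ℕ} {a : Fin s → ℝ} {p : ℝ} {n : ℤ} (hn : n ≠ 0)
    (h : n * p ∈ Gset s a) : ∃ q : Fin s → ℚ, p = ∑ i, (q i : ℝ) * a i := by
  obtain ⟨m, hm⟩ := h
  refine ⟨fun i => m i / n, ?_⟩
  have hn' : (n : ℝ) ≠ 0 := Int.cast_ne_zero.2 hn
  rw [← mul_right_inj' hn', hm, Finset.mul_sum]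
  refine Finset.sum_congr rfl fun i _ => ?_
  push_cast
  field_simp

lemma exists_nat_mul_mem_Gset {s : ℕ} {a : Fin s → ℝ} {p : ℝ}
    (h : ∃ q : Fin s → ℚ, p = ∑ i, (q i : ℝ) * a i) : ∃ D : ℕ, 0 < D ∧ D * p ∈ Gset s a := by
  obtain ⟨q, rfl⟩ := h
  have hint : ∀ i, ∃ z : ℤ, (∏ j, (q j).den : ℕ) * (q i : ℝ) = z := fun i => by
    obtain ⟨e, he⟩ := Finset.dvd_prod_of_mem (fun j => (q j).den) (Finset.mem_univ i)
    refine ⟨e * (q i).num, ?_⟩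
    have hnum := congrArg ((↑) : ℚ → ℝ) (Rat.mul_den_eq_num (q i))
    push_cast at hnum
    rw [he]
    push_cast
    rw [← hnum]
    ring
  choose m hm using hint
  refine ⟨∏ j, (q j).den, Finset.prod_pos fun i _ => (q i).pos, m, ?_⟩
  simp_rw [Finset.mul_sum, ← mul_assoc, hm]

lemma injective_coe_addCircle_of_notMem_span {s : ℕ} {a : Fin s → ℝ} {p : ℝ} {ι : Type*}
    {x : ι → ℝ} (hxG : ∀ j, x j ∈ Gset s a) (hx : Injective x)
    (hp : ¬ ∃ q : Fin s → ℚ, p = ∑ i, (q i : ℝ) * a i) :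
    Injective fun j => (x j : AddCircle p) := by
  intro i j hij
  obtain ⟨n, hn⟩ := AddSubgroup.mem_zmultiples_iff.1 (QuotientAddGroup.eq.1 hij)
  rcases eq_or_ne n 0 with rfl | hn0
  · exact hx (by simpa [neg_add_eq_zero, eq_comm] using hn)
  · refine (hp (exists_rat_of_intCast_mul_mem_Gset hn0 ?_)).elim
    rw [← zsmul_eq_mul, hn, neg_add_eq_sub]
    exact sub_mem_Gset (hxG j) (hxG i)

lemma ae_eq_sum_indicator {ι α M : Type*} [Fintype ι] [MeasurableSpace α] {μ : Measure α}
    [AddCommMonoid M] {I : ι → Set α} (hI : Pairwise (Disjoint on I)) {f : α → M}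
    (hf : ∀ᵐ t ∂μ, t ∉ ⋃ j, I j → f t = 0) : f =ᵐ[μ] fun t => ∑ j, (I j).indicator f t := by
  filter_upwards [hf] with t ht
  rw [← Finset.indicator_biUnion_apply _ _ (hI.set_pairwise _)]
  by_cases hmem : t ∈ ⋃ j, I j
  · rw [indicator_of_mem (by simpa using hmem)]
  · rw [ht hmem, indicator_of_notMem (by simpa using hmem)]

lemma support_indicator_Icc_comp_add_subset (f : ℝ → ℂ) (u r h : ℝ) :
    support (fun t => (Icc (u - r) (u + r)).indicator f (t + h)) ⊆ Icc (u - h - r) (u - h + r) :=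
  fun t ht => have ht' := support_indicator_subset ht; ⟨by linarith [ht'.1], by linarith [ht'.2]⟩

lemma tsum_Ft1_sq_eq_of_lt_dist_coe {b : ℝ} (hb : 0 < b) {ι : Type*} [Fintype ι] {x : ι → ℝ}
    {ε c : ℝ} (hsep : Pairwise fun i j => ε < dist (x i : AddCircle (1 / b)) (x j))
    (hc : ∀ j, ε / 2 < dist (x j : AddCircle (1 / b)) c) {f : ℝ → ℂ}
    (hf : MemL2On1 f (⋃ j, Icc (x j - ε / 2) (x j + ε / 2))) :
    ∑' k : ℤ, (‖Ft1 f (b * k)‖₊ : ℝ≥0∞) ^ 2 = ENNReal.ofReal (1 / b) * l2sq1 f := by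
  obtain ⟨hfm, hfin, hsupp⟩ := hf
  have hT : 0 < 1 / b := one_div_pos.2 hb
  have hf2 : MemLp f 2 := (memLp_two_iff_l2sq1_lt_top hfm).2 hfin
  set I : ι → Set ℝ := fun j => Icc (x j - ε / 2) (x j + ε / 2)
  have hI : Pairwise (Disjoint on I) := fun i j hij => disjoint_Icc_of_lt_dist_coe (hsep hij)
  set φ : ι → ℝ → ℂ := fun j => (I j).indicator f
  have hφ2 : ∀ j, MemLp (φ j) 2 := fun j => hf2.indicator measurableSet_Icc
  have hφ1 : ∀ j, Integrable (φ j) := fun j =>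
    IntegrableOn.integrable_indicator ((hf2.restrict (I j)).integrable one_le_two) measurableSet_Icc
  -- moving the `j`-th piece by `-h j` centres it at `toIocMod`, inside the period `(c, c + 1/b]`
  set h : ι → ℝ := fun j => toIocDiv hT c (x j) • (1 / b)
  have hshift : ∀ j, support (fun t => φ j (t + h j)) ⊆
      Icc (toIocMod hT c (x j) - ε / 2) (toIocMod hT c (x j) + ε / 2) := fun j => by
    rw [← self_sub_toIocDiv_zsmul]
    exact support_indicator_Icc_comp_add_subset f (x j) (ε / 2) (h j)
  set g : ℝ → ℂ := fun t => ∑ j, φ j (t + h j)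
  have hg : MemLp g 2 := memLp_finsetSum _ fun j _ =>
    (hφ2 j).comp_measurePreserving (measurePreserving_add_right volume (h j))
  have hgsupp : ∀ t ∉ Ioc c (c + 1 / b), g t = 0 := fun t ht =>
    Finset.sum_eq_zero fun j _ => notMem_support.1 fun htj =>
      ht (Icc_subset_Ioc_of_lt_dist_coe hT (hc j) (hshift j htj))
  have hpieces : f =ᵐ[volume] fun t => ∑ j, φ j t := ae_eq_sum_indicator hI hsupp
  have hFt : ∀ k : ℤ, Ft1 f (b * k) = Ft1 g (b * k) := fun k => by
    have hm : ∀ j, b * k * h j = ((k * toIocDiv hT c (x j) : ℤ) : ℝ) := fun j => by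
      simp only [h, zsmul_eq_mul]
      push_cast
      field_simp
    rw [Ft1_congr_ae hpieces, Ft1_sum_comp_add_right_of_mul_eq_intCast _ (fun j _ => hφ1 j) hm]
  have hl2 : l2sq1 f = l2sq1 g := by
    rw [l2sq1_congr_ae hpieces, l2sq1_sum_comp_add_right (fun j => (hφ1 j).aemeasurable) h
      (fun i j hij => (hI hij).mono support_indicator_subset support_indicator_subset)
      fun i j hij => (disjoint_Icc_of_lt_dist_coe (T := 1 / b) (by
        rw [coe_toIocMod, coe_toIocMod]; exact hsep hij)).mono (hshift i) (hshift j)]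
  simp_rw [hFt, hl2]
  exact tsum_Ft1_sq_eq_of_eq_zero_off_Ioc hb c hg hgsupp

lemma uniformFrame_sum_dirac_of_notMem_span {s : ℕ} {a : Fin s → ℝ} {b : ℝ} (hb : 0 < b)
    (hq : ¬ ∃ q : Fin s → ℚ, (1 : ℝ) / b = ∑ i, (q i : ℝ) * a i) :
    UniformFrame (Measure.sum fun k : ℤ => Measure.dirac (b * k)) (Gset s a) (1 / b) (1 / b) := by
  intro M x hxG hx δ hδ
  obtain ⟨ε, hε, c, hsep, hc⟩ := exists_pos_lt_dist_coe (one_div_pos.2 hb)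
    (injective_coe_addCircle_of_notMem_span hxG hx hq)
  refine ⟨ε, hε, fun i j hij => ?_, fun f hf => ?_⟩
  · simpa only [onFun, image_add_QI] using disjoint_Icc_of_lt_dist_coe (hsep hij)
  · simp only [image_add_QI] at hf
    rw [lintegral_sum_dirac_mul, tsum_Ft1_sq_eq_of_lt_dist_coe hb hsep hc hf]
    constructor <;> gcongr <;> linarith

lemma l2sq1_indicator_sub_comp_add_pos {ε p : ℝ} (hε : 0 < ε)
    (hdisj : Disjoint (QI ε) ((p + ·) '' QI ε)) :
    0 < l2sq1 fun t => (QI ε).indicator (1 : ℝ → ℂ) t - (QI ε).indicator 1 (t + -p) := by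
  have hvol : 0 < volume (QI ε) := by simp [QI, hε]
  refine hvol.trans_le (volume_le_l2sq1_of_norm_eq_one measurableSet_Icc fun t ht => ?_)
  have ht' : t + -p ∉ QI ε := fun h => disjoint_left.1 hdisj ht ⟨_, h, by ring⟩
  simp [ht, ht']

lemma not_uniformFrame_sum_dirac_of_mem_span {s : ℕ} {a : Fin s → ℝ} {b A B : ℝ} (hb : 0 < b)
    (hA : 0 < A) (hq : ∃ q : Fin s → ℚ, (1 : ℝ) / b = ∑ i, (q i : ℝ) * a i) :
    ¬ UniformFrame (Measure.sum fun k : ℤ => Measure.dirac (b * k)) (Gset s a) A B := by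
  intro hframe
  obtain ⟨D, hD, hDG⟩ := exists_nat_mul_mem_Gset hq
  set p : ℝ := D * (1 / b)
  have hp : 0 < p := by positivity
  have hxG : ∀ j, ![0, p] j ∈ Gset s a := Fin.forall_fin_two.2 ⟨⟨0, by simp⟩, hDG⟩
  obtain ⟨ε, hε, hdisj, hbound⟩ := hframe 2 ![0, p] hxG
    (by simp [Injective, Fin.forall_fin_two, hp.ne, hp.ne']) (A / 2) (half_pos hA)
  -- `p` is a common period of all `e^{-2πi bkt}`, so the two halves of `f` cancel in every `f̂(bk)`
  set φ : ℝ → ℂ := (QI ε).indicator 1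
  set f : ℝ → ℂ := fun t => φ t - φ (t + -p)
  have hφint : Integrable φ :=
    (integrableOn_const measure_Icc_lt_top.ne).integrable_indicator measurableSet_Icc
  have hφ : MemLp φ 2 := memLp_indicator_const 2 measurableSet_Icc 1 (Or.inr measure_Icc_lt_top.ne)
  have hf : MemLp f 2 := hφ.sub (hφ.comp_measurePreserving (measurePreserving_add_right _ _))
  have hfsupp : ∀ t ∉ ⋃ j, (![0, p] j + ·) '' QI ε, f t = 0 := by
    intro t ht
    have h0 : t ∉ QI ε := fun h => ht (mem_iUnion.2 ⟨0, by simpa using h⟩)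
    have h1 : t + -p ∉ QI ε := fun h => ht (mem_iUnion.2 ⟨1, ⟨t + -p, h, by simp⟩⟩)
    simp [f, φ, h0, h1]
  have hFt : ∀ k : ℤ, Ft1 f (b * k) = 0 := fun k =>
    Ft1_sub_comp_add_right_eq_zero hφint (m := -(k * D)) (by
      simp only [p]; field_simp; push_cast; ring)
  have hlow := (hbound f ⟨hf.1, (memLp_two_iff_l2sq1_lt_top hf.1).1 hf, ae_of_all _ hfsupp⟩).1
  simp only [lintegral_sum_dirac_mul, hFt, nnnorm_zero, ENNReal.coe_zero, zero_pow two_ne_zero,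
    tsum_zero, nonpos_iff_eq_zero, mul_eq_zero, ENNReal.ofReal_eq_zero] at hlow
  rcases hlow with hlow | hlow
  · linarith
  · refine (l2sq1_indicator_sub_comp_add_pos hε ?_).ne' hlow
    simpa [onFun] using hdisj (show (0 : Fin 2) ≠ 1 by decide)

theorem lattice_measure_uniform_frame_iff_general (s : ℕ) (a : Fin s → ℝ) (b : ℝ) (hb : 0 < b) :
    ((∃ A B : ℝ, 0 < A ∧ 0 < B ∧
        UniformFrame (Measure.sum fun k : ℤ => Measure.dirac (b * k)) (Gset s a) A B) ↔
      ¬ ∃ q : Fin s → ℚ, (1 : ℝ) / b = ∑ i, (q i : ℝ) * a i) ∧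
    ((¬ ∃ q : Fin s → ℚ, (1 : ℝ) / b = ∑ i, (q i : ℝ) * a i) →
      UniformFrame (Measure.sum fun k : ℤ => Measure.dirac (b * k)) (Gset s a)
        (1 / b) (1 / b)) := by
  refine ⟨⟨fun ⟨A, B, hA, _, hframe⟩ hq => not_uniformFrame_sum_dirac_of_mem_span hb hA hq hframe,
    fun hq => ⟨1 / b, 1 / b, by positivity, by positivity,
      uniformFrame_sum_dirac_of_notMem_span hb hq⟩⟩,
    uniformFrame_sum_dirac_of_notMem_span hb⟩

theorem lattice_measure_uniform_frame_iff (s : ℕ) (hs : 1 ≤ s)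
    (a : Fin s → ℝ) (ha : ∀ i, 0 < a i) (hind : LinearIndependent ℚ a)
    (b : ℝ) (hb : 0 < b) :
    ((∃ A B : ℝ, 0 < A ∧ 0 < B ∧
        UniformFrame (Measure.sum fun k : ℤ => Measure.dirac (b * k)) (Gset s a) A B) ↔
      ¬ ∃ q : Fin s → ℚ, (1 : ℝ) / b = ∑ i, (q i : ℝ) * a i) ∧
    ((¬ ∃ q : Fin s → ℚ, (1 : ℝ) / b = ∑ i, (q i : ℝ) * a i) →
      UniformFrame (Measure.sum fun k : ℤ => Measure.dirac (b * k)) (Gset s a)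
        (1 / b) (1 / b)) :=
  lattice_measure_uniform_frame_iff_general s a b hb
end
end

section
/- There exists an open set E ⊂ ℝ of finite Lebesgue measure such that for any m ≥ 1 and any real numbers x₁,…,x_m, the intersection E ∩ (E + x₁) ∩ ⋯ ∩ (E + x_m) is nonempty. -/
/-!
Cover a countable dense set by open sets of rapidly decreasing measure: the union `E` is open,
dense and of finite measure. Translates of `E` are again open and dense, and finitely many open
dense sets have a dense, hence nonempty, intersection.
-/

open MeasureTheory Set TopologicalSpace

theorem exists_isOpen_dense_measure_lt {X : Type*} [TopologicalSpace X] [SeparableSpace X]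
    [MeasurableSpace X] (μ : Measure X) [NullSingletonClass μ] [Measure.OuterRegular μ]
    {ε : ENNReal} (hε : ε ≠ 0) :
    ∃ E : Set X, IsOpen E ∧ Dense E ∧ μ E < ε := by
  obtain ⟨D, hDc, hDd⟩ := exists_countable_dense X
  have := hDc.to_subtype
  obtain ⟨δ, hδ, hδε⟩ := ENNReal.exists_pos_sum_of_countable hε D
  have hU : ∀ d : D, ∃ U ⊇ {(d : X)}, IsOpen U ∧ μ U < δ d := fun d =>
    Set.exists_isOpen_lt_of_lt _ _ (by simpa using hδ d)
  choose U hdU hUo hUδ using hU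
  refine ⟨⋃ d, U d, isOpen_iUnion hUo, hDd.mono fun d hd => mem_iUnion.2 ⟨⟨d, hd⟩, hdU _ rfl⟩, ?_⟩
  calc μ (⋃ d, U d) ≤ ∑' d, μ (U d) := measure_iUnion_le U
    _ ≤ ∑' d, (δ d : ENNReal) := ENNReal.tsum_le_tsum fun d => (hUδ d).le
    _ < ε := hδε

theorem Dense.iInter_image_add_right {G ι : Type*} [TopologicalSpace G] [AddGroup G]
    [ContinuousAdd G] [Finite ι] {E : Set G} (hEo : IsOpen E) (hEd : Dense E) (x : ι → G) :
    Dense (⋂ i, (· + x i) '' E) := by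
  rw [← sInter_range]
  refine (finite_range _).dense_sInter ?_ ?_ <;> rintro _ ⟨i, rfl⟩
  · exact (Homeomorph.addRight (x i)).isOpenMap E hEo
  · exact (Homeomorph.addRight (x i)).surjective.denseRange.dense_image
      (Homeomorph.addRight (x i)).continuous hEd

theorem exists_open_set_finite_measure_translates_intersect :
    ∃ E : Set ℝ, IsOpen E ∧ volume E < ⊤ ∧
      ∀ (m : ℕ) (x : Fin m → ℝ), (E ∩ ⋂ i, (fun e => e + x i) '' E).Nonempty := by
  obtain ⟨E, hEo, hEd, hE⟩ := exists_isOpen_dense_measure_lt (volume : Measure ℝ) one_ne_zero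
  refine ⟨E, hEo, hE.trans ENNReal.one_lt_top, fun m x => ?_⟩
  exact (hEd.inter_of_isOpen_left (hEd.iInter_image_add_right hEo x) hEo).nonempty
end
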